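/- Let s ∈ {0,1}^N be a sampling pattern with support S, m = ‖s‖₀ ones, 0 < m < N, on a connected weighted graph. Suppose there exist constants C > 0 and δ > 0 such that every φ ∈ ℝ^N supported in S^c satisfies C · vol(S^c)^{-2/δ} · ‖φ‖₂ ≤ ‖Lφ‖₂. Then vol(G) R_s − m(1 − m/N)² ≥ R_s · vol(S^c) ≥ 0, and every φ ∈ ℝ^N supported in S^c satisfies C · ( R_s / (vol(G) R_s − m(1 − m/N)²) )^{2/δ} · ‖φ‖₂ ≤ ‖Lφ‖₂; that is, S^c is Λ-removable with Λ = C ( R_s / (vol(G) R_s − m(1−m/N)²) )^{2/δ}. -/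
import Mathlib


open Finset Matrix

/-- Blue-noise removability bound: if every `φ` supported in `Sᶜ` satisfies the Sobolev-type
bound `C·vol(Sᶜ)^{-2/δ}‖φ‖₂ ≤ ‖Lφ‖₂`, then `vol(G)R_s - m(1-m/N)² ≥ R_s·vol(Sᶜ) ≥ 0` and
`Sᶜ` is `Λ`-removable with `Λ = C (R_s/(vol(G)R_s - m(1-m/N)²))^{2/δ}`. -/
theorem stmt_12 {N : ℕ} (hN : 2 ≤ N)
    (W : Matrix (Fin N) (Fin N) ℝ)
    (hWsymm : W.IsSymm)
    (hWnonneg : ∀ u v, 0 ≤ W u v)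
    (hWdiag : ∀ u, W u u = 0)
    (L : Matrix (Fin N) (Fin N) ℝ)
    (hL : L = Matrix.diagonal (fun u => ∑ v, W u v) - W)
    (μ : Fin N → ℝ) (U : Matrix (Fin N) (Fin N) ℝ)
    (hU : Uᵀ * U = 1)
    (hμmono : Monotone μ)
    (hμ0 : μ (⟨0, by omega⟩ : Fin N) = 0)
    (hμ2 : 0 < μ (⟨1, by omega⟩ : Fin N))
    (hU0 : ∀ i, U i (⟨0, by omega⟩ : Fin N) = 1 / Real.sqrt N)
    (heig : ∀ ℓ, L.mulVec (fun i => U i ℓ) = μ ℓ • (fun i => U i ℓ))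
    (S : Finset (Fin N)) (s : Fin N → ℝ)
    (hs : ∀ v, s v = if v ∈ S then 1 else 0)
    (m : ℕ) (hm : m = S.card) (hm0 : 0 < m) (hmN : m < N)
    (C δ : ℝ) (hC : 0 < C) (hδ : 0 < δ)
    (hsob : ∀ φ : Fin N → ℝ, (∀ v ∈ S, φ v = 0) →
      C * (∑ u ∈ Sᶜ, ∑ v, W u v) ^ (-(2 / δ)) * Real.sqrt (∑ v, φ v ^ 2) ≤
        Real.sqrt (∑ v, (L.mulVec φ) v ^ 2)) :
    ((∑ u, ∑ v, W u v) *
        ((1 / (m : ℝ)) *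
          ∑ ℓ ∈ Finset.univ.erase (⟨0, by omega⟩ : Fin N), ((Uᵀ.mulVec s) ℓ) ^ 2 / μ ℓ) -
        (m : ℝ) * (1 - (m : ℝ) / N) ^ 2 ≥
      ((1 / (m : ℝ)) *
          ∑ ℓ ∈ Finset.univ.erase (⟨0, by omega⟩ : Fin N), ((Uᵀ.mulVec s) ℓ) ^ 2 / μ ℓ) *
        (∑ u ∈ Sᶜ, ∑ v, W u v))
    ∧
    (((1 / (m : ℝ)) *
          ∑ ℓ ∈ Finset.univ.erase (⟨0, by omega⟩ : Fin N), ((Uᵀ.mulVec s) ℓ) ^ 2 / μ ℓ) *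
        (∑ u ∈ Sᶜ, ∑ v, W u v) ≥ 0)
    ∧
    (∀ φ : Fin N → ℝ, (∀ v ∈ S, φ v = 0) →
      C * (((1 / (m : ℝ)) *
              ∑ ℓ ∈ Finset.univ.erase (⟨0, by omega⟩ : Fin N), ((Uᵀ.mulVec s) ℓ) ^ 2 / μ ℓ) /
            ((∑ u, ∑ v, W u v) *
                ((1 / (m : ℝ)) *
                  ∑ ℓ ∈ Finset.univ.erase (⟨0, by omega⟩ : Fin N),
                    ((Uᵀ.mulVec s) ℓ) ^ 2 / μ ℓ) -
              (m : ℝ) * (1 - (m : ℝ) / N) ^ 2)) ^ (2 / δ) *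
          Real.sqrt (∑ v, φ v ^ 2) ≤
        Real.sqrt (∑ v, (L.mulVec φ) v ^ 2)) := by
  have hNpos : (0:ℝ) < N := by exact_mod_cast (by omega : 0 < N)
  have hNne : (N:ℝ) ≠ 0 := ne_of_gt hNpos
  have hmpos : (0:ℝ) < m := by exact_mod_cast hm0
  have hmne : (m:ℝ) ≠ 0 := ne_of_gt hmpos
  have hmltN : (m:ℝ) < N := by exact_mod_cast hmN
  set z : Fin N := ⟨0, by omega⟩ with hzdef
  set sh : Fin N → ℝ := Uᵀ.mulVec s with hsh
  set volG := ∑ u, ∑ v, W u v with hvolG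
  set volC := ∑ u ∈ Sᶜ, ∑ v, W u v with hvolC
  set volS := ∑ u ∈ S, ∑ v, W u v with hvolS
  set B := ∑ ℓ ∈ Finset.univ.erase z, sh ℓ ^ 2 / μ ℓ with hB
  -- spectral facts
  have hUU : U * Uᵀ = 1 := mul_eq_one_comm.mp hU
  have hLU : L * U = U * Matrix.diagonal μ := by
    ext i ℓ
    rw [Matrix.mul_apply, Matrix.mul_diagonal]
    have h := congrFun (heig ℓ) i
    simp only [Matrix.mulVec, dotProduct, Pi.smul_apply, smul_eq_mul] at h
    rw [h]; ring
  have hLspec : L = U * Matrix.diagonal μ * Uᵀ := by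
    calc L = L * (U * Uᵀ) := by rw [hUU, Matrix.mul_one]
    _ = (L * U) * Uᵀ := by rw [Matrix.mul_assoc]
    _ = U * Matrix.diagonal μ * Uᵀ := by rw [hLU]
  have hquad : ∀ x : Fin N → ℝ, x ⬝ᵥ L.mulVec x = ∑ ℓ, μ ℓ * ((Uᵀ.mulVec x) ℓ)^2 := by
    intro x
    rw [hLspec, ← Matrix.mulVec_mulVec, ← Matrix.mulVec_mulVec,
      Matrix.dotProduct_mulVec, ← Matrix.mulVec_transpose]
    simp only [dotProduct, Matrix.mulVec_diagonal]
    exact Finset.sum_congr rfl fun ℓ _ => by ring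
  have hpars : ∀ x : Fin N → ℝ, ∑ ℓ, ((Uᵀ.mulVec x) ℓ)^2 = ∑ i, x i ^ 2 := by
    intro x
    have h1 : x ⬝ᵥ ((U * Uᵀ).mulVec x) = (Uᵀ.mulVec x) ⬝ᵥ (Uᵀ.mulVec x) := by
      rw [← Matrix.mulVec_mulVec, Matrix.dotProduct_mulVec, ← Matrix.mulVec_transpose]
    rw [hUU, Matrix.one_mulVec] at h1
    simpa [dotProduct, pow_two] using h1.symm
  -- facts about s
  have hs_nonneg : ∀ v, 0 ≤ s v := by intro v; rw [hs]; split <;> norm_num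
  have hssum : ∑ i, s i = (m:ℝ) := by
    simp only [hs]
    rw [Finset.sum_ite_mem, Finset.univ_inter, Finset.sum_const, hm]
    simp
  have hsq : ∑ i, s i ^ 2 = (m:ℝ) := by
    rw [← hssum]
    exact Finset.sum_congr rfl fun i _ => by rw [hs]; split <;> norm_num
  have hshz : sh z = (m:ℝ) / Real.sqrt N := by
    have h1 : sh z = ∑ i, (1 / Real.sqrt N) * s i := by
      simp only [hsh, Matrix.mulVec, dotProduct, Matrix.transpose_apply]
      exact Finset.sum_congr rfl fun i _ => by rw [hU0 i]
    rw [h1, ← Finset.mul_sum, hssum]; ring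
  have hshz2 : sh z ^ 2 = (m:ℝ)^2 / N := by
    rw [hshz, div_pow, Real.sq_sqrt hNpos.le]
  have hA : ∑ ℓ ∈ Finset.univ.erase z, sh ℓ ^ 2 = (m:ℝ) - (m:ℝ)^2/N := by
    have h1 := Finset.add_sum_erase Finset.univ (fun ℓ => sh ℓ ^ 2) (Finset.mem_univ z)
    have h2 : ∑ ℓ, sh ℓ ^ 2 = (m:ℝ) := by rw [hsh, hpars s, hsq]
    simp only [h2] at h1
    have h3 : sh z ^ 2 + ∑ ℓ ∈ Finset.univ.erase z, sh ℓ ^ 2 = (m:ℝ) := h1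
    rw [hshz2] at h3
    linarith
  have hApos : (0:ℝ) < (m:ℝ) - (m:ℝ)^2/N := by
    have h1 : (m:ℝ) - (m:ℝ)^2/N = (m:ℝ) * ((N:ℝ) - m) / N := by field_simp
    rw [h1]
    exact div_pos (mul_pos hmpos (by linarith)) hNpos
  -- μ facts
  have hμnonneg : ∀ ℓ, 0 ≤ μ ℓ := by
    intro ℓ
    have : z ≤ ℓ := by simp [hzdef, Fin.le_def]
    calc (0:ℝ) = μ z := hμ0.symm
    _ ≤ μ ℓ := hμmono this
  have hμpos : ∀ ℓ ∈ Finset.univ.erase z, 0 < μ ℓ := by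
    intro ℓ hℓ
    have hℓz : ℓ ≠ z := (Finset.mem_erase.mp hℓ).1
    have hval : ℓ.val ≠ 0 := fun h => hℓz (Fin.ext h)
    have h1 : (⟨1, by omega⟩ : Fin N) ≤ ℓ := by rw [Fin.le_def]; simpa using Nat.one_le_iff_ne_zero.mpr hval
    exact lt_of_lt_of_le hμ2 (hμmono h1)
  have hBnonneg : 0 ≤ B :=
    Finset.sum_nonneg fun ℓ hℓ => div_nonneg (sq_nonneg _) (hμpos ℓ hℓ).le
  -- the quadratic form of s
  set Q := s ⬝ᵥ L.mulVec s with hQdef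
  have hQspec : Q = ∑ ℓ ∈ Finset.univ.erase z, μ ℓ * sh ℓ ^ 2 := by
    rw [hQdef, hquad s, ← Finset.add_sum_erase Finset.univ _ (Finset.mem_univ z), ← hsh, hμ0]
    simp
  have hQnonneg : 0 ≤ Q := by
    rw [hQspec]
    exact Finset.sum_nonneg fun ℓ hℓ => mul_nonneg (hμpos ℓ hℓ).le (sq_nonneg _)
  have hQle : Q ≤ volS := by
    have h1 : ∀ u, (L.mulVec s) u = (∑ v, W u v) * s u - ∑ v, W u v * s v := by
      intro u
      rw [hL, Matrix.sub_mulVec]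
      simp only [Pi.sub_apply, Matrix.mulVec_diagonal]
      congr 1
    have h2 : Q = (∑ u, s u ^ 2 * ∑ v, W u v) - ∑ u, ∑ v, s u * (W u v * s v) := by
      rw [hQdef]
      calc s ⬝ᵥ L.mulVec s = ∑ u, s u * ((∑ v, W u v) * s u - ∑ v, W u v * s v) := by
            exact Finset.sum_congr rfl fun u _ => by rw [h1 u]
      _ = ∑ u, (s u ^ 2 * (∑ v, W u v) - ∑ v, s u * (W u v * s v)) := by
            refine Finset.sum_congr rfl fun u _ => ?_
            rw [mul_sub, Finset.mul_sum]
            have he : s u * ((∑ v, W u v) * s u) = s u ^ 2 * ∑ v, W u v := by ring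
            rw [he]
      _ = _ := by rw [Finset.sum_sub_distrib]
    have h3 : ∑ u, s u ^ 2 * (∑ v, W u v) = volS := by
      have : ∀ u, s u ^ 2 * (∑ v, W u v) = if u ∈ S then (∑ v, W u v) else 0 := by
        intro u; rw [hs]; split <;> simp
      rw [Finset.sum_congr rfl fun u _ => this u, Finset.sum_ite_mem, Finset.univ_inter, hvolS]
    have h4 : 0 ≤ ∑ u, ∑ v, s u * (W u v * s v) :=
      Finset.sum_nonneg fun u _ => Finset.sum_nonneg fun v _ =>
        mul_nonneg (hs_nonneg u) (mul_nonneg (hWnonneg u v) (hs_nonneg v))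
    rw [h2, h3]; linarith
  -- Cauchy–Schwarz
  have hCS : ((m:ℝ) - (m:ℝ)^2/N)^2 ≤ B * Q := by
    rw [← hA, hQspec, hB]
    have key := Finset.sum_mul_sq_le_sq_mul_sq (Finset.univ.erase z)
      (fun ℓ => sh ℓ / Real.sqrt (μ ℓ)) (fun ℓ => sh ℓ * Real.sqrt (μ ℓ))
    have e1 : ∑ ℓ ∈ Finset.univ.erase z, (sh ℓ / Real.sqrt (μ ℓ)) * (sh ℓ * Real.sqrt (μ ℓ))
        = ∑ ℓ ∈ Finset.univ.erase z, sh ℓ ^ 2 := by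
      refine Finset.sum_congr rfl fun ℓ hℓ => ?_
      have h0 : Real.sqrt (μ ℓ) ≠ 0 := ne_of_gt (Real.sqrt_pos.mpr (hμpos ℓ hℓ))
      field_simp
    have e2 : ∑ ℓ ∈ Finset.univ.erase z, (sh ℓ / Real.sqrt (μ ℓ))^2
        = ∑ ℓ ∈ Finset.univ.erase z, sh ℓ ^ 2 / μ ℓ := by
      refine Finset.sum_congr rfl fun ℓ hℓ => ?_
      rw [div_pow, Real.sq_sqrt (hμpos ℓ hℓ).le]
    have e3 : ∑ ℓ ∈ Finset.univ.erase z, (sh ℓ * Real.sqrt (μ ℓ))^2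
        = ∑ ℓ ∈ Finset.univ.erase z, μ ℓ * sh ℓ ^ 2 := by
      refine Finset.sum_congr rfl fun ℓ hℓ => ?_
      rw [mul_pow, Real.sq_sqrt (hμpos ℓ hℓ).le]; ring
    rw [e1, e2, e3] at key
    exact key
  have hBpos : 0 < B := by
    rcases hBnonneg.lt_or_eq with h | h
    · exact h
    · exfalso
      have h1 : 0 < ((m:ℝ) - (m:ℝ)^2/N)^2 := pow_pos hApos 2
      rw [← h] at hCS
      simp at hCS
      nlinarith
  -- positivity of vol(Sᶜ)
  have hvolCnonneg : 0 ≤ volC :=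
    Finset.sum_nonneg fun u _ => Finset.sum_nonneg fun v _ => hWnonneg u v
  have hvolSnonneg : 0 ≤ volS :=
    Finset.sum_nonneg fun u _ => Finset.sum_nonneg fun v _ => hWnonneg u v
  have hvolCpos : 0 < volC := by
    rcases hvolCnonneg.lt_or_eq with h | h
    · exact h
    exfalso
    have hcard : Sᶜ.Nonempty := by
      rw [← Finset.card_pos, Finset.card_compl]
      simp [← hm]
      omega
    obtain ⟨u₀, hu₀⟩ := hcard
    have hdeg : ∑ v, W u₀ v = 0 :=
      (Finset.sum_eq_zero_iff_of_nonneg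
        (fun u _ => Finset.sum_nonneg fun v _ => hWnonneg u v)).mp h.symm u₀ hu₀
    have hW0 : ∀ v, W u₀ v = 0 := fun v =>
      (Finset.sum_eq_zero_iff_of_nonneg (fun v _ => hWnonneg u₀ v)).mp hdeg v (Finset.mem_univ v)
    set e : Fin N → ℝ := fun i => if i = u₀ then 1 else 0 with he
    have hLe : L.mulVec e = 0 := by
      funext i
      have hWi : W i u₀ = 0 := by rw [← hWsymm.apply, hW0 i]
      have h1 : (L.mulVec e) i = L i u₀ := by
        simp [Matrix.mulVec, dotProduct, he, mul_ite]
      rw [h1, hL]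
      simp only [Matrix.sub_apply, Matrix.diagonal_apply, hWi]
      split
      · rename_i hi; rw [hi, hdeg]; simp
      · simp
    have h0 : (0:ℝ) = ∑ ℓ, μ ℓ * ((Uᵀ.mulVec e) ℓ)^2 := by
      rw [← hquad e, hLe]
      simp [dotProduct]
    have hterm : ∀ ℓ, μ ℓ * ((Uᵀ.mulVec e) ℓ)^2 = 0 := by
      intro ℓ
      exact (Finset.sum_eq_zero_iff_of_nonneg
        (fun ℓ _ => mul_nonneg (hμnonneg ℓ) (sq_nonneg _))).mp h0.symm ℓ (Finset.mem_univ ℓ)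
    have hUe : ∀ ℓ, (Uᵀ.mulVec e) ℓ = U u₀ ℓ := by
      intro ℓ
      simp [Matrix.mulVec, dotProduct, he, mul_ite]
    have hUz : ∀ ℓ, ℓ ≠ z → U u₀ ℓ = 0 := by
      intro ℓ hℓ
      have h1 := hterm ℓ
      rw [hUe ℓ] at h1
      have h2 : μ ℓ ≠ 0 := ne_of_gt (hμpos ℓ (Finset.mem_erase.mpr ⟨hℓ, Finset.mem_univ ℓ⟩))
      have := (mul_eq_zero.mp h1).resolve_left h2
      exact pow_eq_zero_iff (n := 2) (by norm_num) |>.mp this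
    have hrow : ∑ ℓ, U u₀ ℓ ^ 2 = 1 := by
      have h1 := congrFun (congrFun hUU u₀) u₀
      simp only [Matrix.mul_apply, Matrix.transpose_apply, Matrix.one_apply_eq] at h1
      rw [← h1]
      exact Finset.sum_congr rfl fun ℓ _ => by ring
    have hrow2 : ∑ ℓ, U u₀ ℓ ^ 2 = 1 / N := by
      rw [← Finset.add_sum_erase Finset.univ _ (Finset.mem_univ z)]
      rw [Finset.sum_eq_zero (fun ℓ hℓ => by
        rw [hUz ℓ (Finset.mem_erase.mp hℓ).1]; ring)]
      rw [hU0 u₀, div_pow, Real.sq_sqrt hNpos.le]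
      ring
    rw [hrow] at hrow2
    have h2N : (2:ℝ) ≤ N := by exact_mod_cast hN
    have : (N:ℝ) = 1 := by field_simp at hrow2; linarith
    linarith
  -- main inequality : volS * B ≥ A²
  have hkey : ((m:ℝ) - (m:ℝ)^2/N)^2 ≤ volS * B := by
    calc ((m:ℝ) - (m:ℝ)^2/N)^2 ≤ B * Q := hCS
    _ ≤ B * volS := mul_le_mul_of_nonneg_left hQle hBnonneg
    _ = volS * B := mul_comm _ _
  have hrewr : (m:ℝ) * (1 - (m:ℝ)/N)^2 = ((m:ℝ) - (m:ℝ)^2/N)^2 / m := by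
    field_simp
  have hsplit : volG = volS + volC := by
    rw [hvolG, hvolS, hvolC, Finset.sum_add_sum_compl]
  have hg1 : volG * ((1/(m:ℝ)) * B) - (m:ℝ) * (1 - (m:ℝ)/N)^2 ≥ ((1/(m:ℝ)) * B) * volC := by
    rw [hrewr, hsplit, ge_iff_le, ← sub_nonneg]
    have hid : (volS + volC) * (1/(m:ℝ) * B) - ((m:ℝ) - (m:ℝ)^2/N)^2 / m - (1/(m:ℝ) * B) * volC
        = (volS * B - ((m:ℝ) - (m:ℝ)^2/N)^2) * (1/m) := by
      field_simp; ring
    rw [hid]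
    exact mul_nonneg (sub_nonneg.mpr hkey) (by positivity)
  have hg2 : ((1/(m:ℝ)) * B) * volC ≥ 0 :=
    mul_nonneg (mul_nonneg (by positivity) hBnonneg) hvolCnonneg
  refine ⟨hg1, hg2, ?_⟩
  intro φ hφ
  have hsobφ := hsob φ hφ
  have hRpos : 0 < (1/(m:ℝ)) * B := mul_pos (by positivity) hBpos
  have hDpos : 0 < volG * ((1/(m:ℝ)) * B) - (m:ℝ) * (1 - (m:ℝ)/N)^2 :=
    lt_of_lt_of_le (mul_pos hRpos hvolCpos) hg1
  have hfrac : ((1/(m:ℝ)) * B) / (volG * ((1/(m:ℝ)) * B) - (m:ℝ) * (1 - (m:ℝ)/N)^2)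
      ≤ volC⁻¹ := by
    rw [← one_div volC, div_le_div_iff₀ hDpos hvolCpos]
    linarith [hg1]
  have hpow : (((1/(m:ℝ)) * B) / (volG * ((1/(m:ℝ)) * B) - (m:ℝ) * (1 - (m:ℝ)/N)^2)) ^ (2/δ)
      ≤ volC ^ (-(2/δ)) := by
    rw [Real.rpow_neg hvolCnonneg, ← Real.inv_rpow hvolCnonneg]
    exact Real.rpow_le_rpow (div_nonneg hRpos.le hDpos.le) hfrac (by positivity)
  calc C * (((1/(m:ℝ)) * B) / (volG * ((1/(m:ℝ)) * B) - (m:ℝ) * (1 - (m:ℝ)/N)^2)) ^ (2/δ)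
        * Real.sqrt (∑ v, φ v ^ 2)
      ≤ C * volC ^ (-(2/δ)) * Real.sqrt (∑ v, φ v ^ 2) := by
        have hsq : 0 ≤ Real.sqrt (∑ v, φ v ^ 2) := Real.sqrt_nonneg _
        gcongr
  _ ≤ Real.sqrt (∑ v, (L.mulVec φ) v ^ 2) := hsobφ
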